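/- arXiv:2006.08418 — 2 statements merged into one kernel-verified Lean document; each statement's English description precedes it below -/
import Mathlib

section
/- Let n ≥ 1, let m be a Hessenberg function on {1,…,n}, let S be a decoration on m, and let λ be a partition of n. Then all coefficients of the polynomial P(X+1) ∈ ℤ[X] are nonnegative, where P(q) := Σ_{S' ⊆ S} (−1)^{|S'|} c_λ(m_{S'}) ∈ ℤ[q]. -/
open Finset

/-- A Hessenberg function on the vertex set `Fin n` (0-indexed version of `{1,…,n}`):
a monotone function with `i ≤ m i` for all `i`.  The associated indifference graph
`G_m` has an edge `{i,j}` whenever `i < j ≤ m i`. -/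
structure Hessenberg (n : ℕ) where
  m : Fin n → Fin n
  mono : Monotone m
  le_m : ∀ i, i ≤ m i

/-- An increasing spanning forest of the indifference graph `G_m`, encoded by its
parent function `g` : `g j = some u` means `{u, j}` is an edge of the forest with
`u < j` and `j ≤ m u` (so that `{u,j}` is an edge of `G_m`); `g j = none` means `j`
is a root. -/
def ISF {n : ℕ} (h : Hessenberg n) : Type :=
  {g : Fin n → Option (Fin n) // ∀ j u, g j = some u → u < j ∧ j ≤ h.m u}

instance {n : ℕ} (h : Hessenberg n) : Fintype (ISF h) := by
  unfold ISF; infer_instance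

instance {n : ℕ} (h : Hessenberg n) : DecidableEq (ISF h) := by
  unfold ISF; infer_instance

/-- The root of the component of `j` in the forest with parent function `g`. -/
def rootOf {n : ℕ} (g : Fin n → Option (Fin n))
    (hg : ∀ j u, g j = some u → u < j) (j : Fin n) : Fin n :=
  match hj : g j with
  | none => j
  | some u => rootOf g hg u
termination_by j.val
decreasing_by exact hg j u hj

/-- The root (minimal vertex) of the component of `j` in the forest `F`. -/
def ISF.root {n : ℕ} {h : Hessenberg n} (F : ISF h) (j : Fin n) : Fin n :=
  rootOf F.1 (fun j u hj => (F.2 j u hj).1) j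

/-- The set of roots of the forest `F`. -/
def ISF.roots {n : ℕ} {h : Hessenberg n} (F : ISF h) : Finset (Fin n) :=
  univ.filter (fun j => F.1 j = none)

/-- `ℓ(F)`, the number of connected components of `F`. -/
def ISF.numComp {n : ℕ} {h : Hessenberg n} (F : ISF h) : ℕ := F.roots.card

/-- The number of vertices of the component of `F` with root `r`. -/
def ISF.compSize {n : ℕ} {h : Hessenberg n} (F : ISF h) (r : Fin n) : ℕ :=
  (univ.filter (fun w => F.root w = r)).card

/-- `λ(F)`: the multiset of component sizes of `F` (a partition of `n`). -/
def ISF.parts {n : ℕ} {h : Hessenberg n} (F : ISF h) : Multiset ℕ :=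
  F.roots.val.map F.compSize

/-- The number of `G_m`-inversions of `F`: pairs `v < w` that are edges of `G_m`
(`w ≤ m v`) such that the component of `v` comes strictly after (has larger root
than) the component of `w`. -/
def ISF.inv {n : ℕ} {h : Hessenberg n} (F : ISF h) : ℕ :=
  (univ.filter (fun p : Fin n × Fin n =>
    p.1 < p.2 ∧ p.2 ≤ h.m p.1 ∧ F.root p.2 < F.root p.1)).card

/-- The length of the edge of `F` below `j` (0 if `j` is a root): the number of
vertices of the component of `j` strictly between the two endpoints. -/
def ISF.edgeLen {n : ℕ} {h : Hessenberg n} (F : ISF h) (j : Fin n) : ℕ :=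
  (F.1 j).elim 0 (fun u =>
    (univ.filter (fun w => F.root w = F.root j ∧ u < w ∧ w < j)).card)

/-- `wt_m(F) = inv(F) + Σ_T wt(T)`, the weight of the increasing spanning forest. -/
def ISF.wt {n : ℕ} {h : Hessenberg n} (F : ISF h) : ℕ :=
  F.inv + ∑ j, F.edgeLen j

/-- `y_{λ(F)}`, the product of `y` over the component sizes of `F`. -/
def yProd {R : Type*} [CommRing R] (y : ℕ → R) {n : ℕ} {h : Hessenberg n}
    (F : ISF h) : R :=
  ∏ r ∈ F.roots, y (F.compSize r)

/-- `X(m) = Σ_{F ∈ F(G_m)} q^{wt_m(F)} y_{λ(F)}`. -/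
def Xfun {R : Type*} [CommRing R] (q : R) (y : ℕ → R) {n : ℕ} (h : Hessenberg n) : R :=
  ∑ F : ISF h, q ^ F.wt * yProd y F

/-- The `q`-integer `[j]_q = 1 + q + ⋯ + q^{j-1}`. -/
def qInt {R : Type*} [CommRing R] (q : R) (j : ℕ) : R := ∑ k ∈ range j, q ^ k

/-- The `q`-factorial `n!_q = Π_{j=1}^n [j]_q`. -/
def qFact {R : Type*} [CommRing R] (q : R) (n : ℕ) : R := ∏ j ∈ range n, qInt q (j + 1)

/-- `c_λ(m) = Σ_{F ∈ F(G_m), λ(F) = λ} q^{wt_m(F)} ∈ ℤ[q]`. -/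
noncomputable def cLam {n : ℕ} (h : Hessenberg n) (lam : Nat.Partition n) : Polynomial ℤ :=
  ∑ F ∈ Finset.univ.filter (fun F : ISF h => F.parts = lam.parts),
    (Polynomial.X : Polynomial ℤ) ^ F.wt

section Aux
open Polynomial

variable {n : ℕ}

lemma rootOf_none (g : Fin n → Option (Fin n))
    (hg : ∀ j u, g j = some u → u < j) (j : Fin n) (h : g j = none) :
    rootOf g hg j = j := by
  rw [rootOf]; split <;> simp_all

lemma rootOf_some (g : Fin n → Option (Fin n))
    (hg : ∀ j u, g j = some u → u < j) (j u : Fin n) (h : g j = some u) :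
    rootOf g hg j = rootOf g hg u := by
  rw [rootOf]; split <;> simp_all

lemma ISF.root_congr {h h' : Hessenberg n} {F : ISF h} {G : ISF h'}
    (e : F.1 = G.1) : F.root = G.root := by
  obtain ⟨f, hf⟩ := F
  obtain ⟨g, hg⟩ := G
  have : f = g := e
  subst this
  rfl

/-- generic inversion set w.r.t. a bound function `mm`. -/
def invC (mm : Fin n → Fin n) {h : Hessenberg n} (F : ISF h) : Finset (Fin n × Fin n) :=
  Finset.univ.filter fun p => p.1 < p.2 ∧ p.2 ≤ mm p.1 ∧ F.root p.2 < F.root p.1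

lemma ISF.inv_eq_invC {h : Hessenberg n} (F : ISF h) : F.inv = (invC h.m F).card := rfl

lemma invC_congr (mm : Fin n → Fin n) {h h' : Hessenberg n} {F : ISF h} {G : ISF h'}
    (e : F.1 = G.1) : invC mm F = invC mm G := by
  unfold invC; rw [ISF.root_congr e]

lemma ISF.edgeLen_congr {h h' : Hessenberg n} {F : ISF h} {G : ISF h'}
    (e : F.1 = G.1) : F.edgeLen = G.edgeLen := by
  funext j; unfold ISF.edgeLen; rw [ISF.root_congr e, e]

lemma ISF.parts_congr {h h' : Hessenberg n} {F : ISF h} {G : ISF h'}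
    (e : F.1 = G.1) : F.parts = G.parts := by
  unfold ISF.parts ISF.roots ISF.compSize; rw [ISF.root_congr e, e]

end Aux
section Aux2
open Polynomial

variable {n : ℕ}

/-- `B(F)`: decorated vertices whose potential inversion pair `(i, m i)` is an inversion. -/
def Bset (m : Hessenberg n) (S : Finset (Fin n)) (F : ISF m) : Finset (Fin n) :=
  S.filter fun i => F.root (m.m i) < F.root i

/-- `A(F)`: decorated vertices such that `(i, m i)` is not an edge of `F`. -/
def Aset (m : Hessenberg n) (S : Finset (Fin n)) (F : ISF m) : Finset (Fin n) :=
  S.filter fun i => F.1 (m.m i) ≠ some i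

lemma Bset_subset_Aset (m : Hessenberg n) (S : Finset (Fin n)) (F : ISF m) :
    Bset m S F ⊆ Aset m S F := by
  intro i hi
  rw [Bset, Finset.mem_filter] at hi
  rw [Aset, Finset.mem_filter]
  refine ⟨hi.1, fun hcon => ?_⟩
  have : F.root (m.m i) = F.root i :=
    rootOf_some F.1 (fun j u hj => (F.2 j u hj).1) (m.m i) i hcon
  rw [this] at hi
  exact lt_irrefl _ hi.2

lemma pair_inj' (m : Hessenberg n) : Function.Injective (fun i : Fin n => (i, m.m i)) :=
  fun a b h => congrArg Prod.fst h

/-- Decomposition of the inversion set of a decreased Hessenberg function. -/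
lemma invC_decompose (m : Hessenberg n) (S : Finset (Fin n))
    (hS : ∀ i ∈ S, (i : ℕ) < (m.m i : ℕ)) (h' : Hessenberg n) (S' : Finset (Fin n))
    (hS'S : S' ⊆ S)
    (hm' : ∀ u, ((h'.m u : ℕ)) = if u ∈ S' then (m.m u : ℕ) - 1 else (m.m u : ℕ))
    (F : ISF m) :
    invC h'.m F =
      (invC m.m F \ (Bset m S F).image (fun i => (i, m.m i))) ∪
        ((Bset m S F \ S').image (fun i => (i, m.m i))) := by
  ext ⟨v, w⟩
  simp only [invC, Bset, Finset.mem_filter, Finset.mem_univ, true_and, Finset.mem_union,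
    Finset.mem_sdiff, Finset.mem_image, Prod.mk.injEq, Fin.lt_def, Fin.le_def]
  constructor
  · rintro ⟨hv, hw, hr⟩
    have hwv : (w : ℕ) ≤ (m.m v : ℕ) := by
      have := hm' v
      by_cases hvS : v ∈ S' <;> simp [hvS] at this <;> omega
    by_cases hvS : v ∈ S'
    · -- w < m.m v strictly
      have h1 : (v : ℕ) < (m.m v : ℕ) := hS v (hS'S hvS)
      have h2 : (w : ℕ) < (m.m v : ℕ) := by
        have := hm' v; simp [hvS] at this; omega
      left
      refine ⟨⟨hv, hwv, hr⟩, ?_⟩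
      rintro ⟨i, -, hi1, hi2⟩
      subst hi1; subst hi2
      exact lt_irrefl _ h2
    · by_cases him : ∃ i, (i ∈ S ∧ F.root (m.m i) < F.root i) ∧ i = v ∧ m.m i = w
      · right
        obtain ⟨i, hi, hi1, hi2⟩ := him
        exact ⟨i, ⟨hi, by rw [hi1]; exact hvS⟩, hi1, hi2⟩
      · left
        exact ⟨⟨hv, hwv, hr⟩, him⟩
  · rintro (⟨⟨hv, hw, hr⟩, him⟩ | ⟨i, ⟨⟨hiS, hir⟩, hiS'⟩, hi1, hi2⟩)
    · refine ⟨hv, ?_, hr⟩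
      have := hm' v
      by_cases hvS : v ∈ S'
      · simp only [hvS, if_true] at this
        rw [this]
        rcases eq_or_lt_of_le hw with heq | hlt
        · exfalso
          apply him
          exact ⟨v, ⟨hS'S hvS, by rwa [show m.m v = w from Fin.ext heq.symm]⟩, rfl,
            Fin.ext heq.symm⟩
        · omega
      · simp only [hvS, if_false] at this; omega
    · subst hi1; subst hi2
      refine ⟨hS i hiS, ?_, hir⟩
      have := hm' i
      simp only [hiS', if_false] at this
      omega

end Aux2
section Aux3
open Polynomial

variable {n : ℕ}

lemma invC_card (m : Hessenberg n) (S : Finset (Fin n))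
    (hS : ∀ i ∈ S, (i : ℕ) < (m.m i : ℕ)) (h' : Hessenberg n) (S' : Finset (Fin n))
    (hS'S : S' ⊆ S)
    (hm' : ∀ u, ((h'.m u : ℕ)) = if u ∈ S' then (m.m u : ℕ) - 1 else (m.m u : ℕ))
    (F : ISF m) :
    (invC h'.m F).card =
      (invC m.m F \ (Bset m S F).image (fun i => (i, m.m i))).card +
        (Bset m S F \ S').card := by
  rw [invC_decompose m S hS h' S' hS'S hm' F, Finset.card_union_of_disjoint,
    Finset.card_image_of_injective _ (pair_inj' m)]
  rw [Finset.disjoint_right]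
  intro p hp hp2
  rw [Finset.mem_sdiff] at hp2
  apply hp2.2
  rw [Finset.mem_image] at hp ⊢
  obtain ⟨i, hi, hip⟩ := hp
  exact ⟨i, (Finset.mem_sdiff.mp hi).1, hip⟩

lemma alt_sum_powerset {ι : Type*} [DecidableEq ι] (x : Polynomial ℤ)
    (A B : Finset ι) (hBA : B ⊆ A) :
    ∑ t ∈ A.powerset, (-1 : Polynomial ℤ) ^ t.card * x ^ (B \ t).card =
      if A = B then (x - 1) ^ B.card else 0 := by
  have key := Finset.prod_add (fun _ : ι => (-1 : Polynomial ℤ))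
    (fun i => if i ∈ B then x else 1) A
  have h1 : ∀ t ∈ A.powerset,
      (∏ _i ∈ t, (-1 : Polynomial ℤ)) * ∏ i ∈ A \ t, (if i ∈ B then x else 1)
        = (-1 : Polynomial ℤ) ^ t.card * x ^ (B \ t).card := by
    intro t ht
    rw [Finset.prod_const, Finset.prod_ite_mem, Finset.prod_const]
    congr 2
    congr 1
    ext i
    simp only [Finset.mem_inter, Finset.mem_sdiff]
    constructor
    · rintro ⟨⟨-, hit⟩, hib⟩; exact ⟨hib, hit⟩
    · rintro ⟨hib, hit⟩; exact ⟨⟨hBA hib, hit⟩, hib⟩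
  rw [Finset.sum_congr rfl h1] at key
  rw [← key]
  by_cases hAB : A = B
  · subst hAB
    rw [if_pos rfl]
    calc ∏ i ∈ A, ((-1 : Polynomial ℤ) + if i ∈ A then x else 1)
        = ∏ _i ∈ A, (x - 1) := Finset.prod_congr rfl (fun i hi => by simp [hi]; ring)
      _ = (x - 1) ^ A.card := Finset.prod_const _
  · rw [if_neg hAB]
    obtain ⟨i, hiA, hiB⟩ : ∃ i ∈ A, i ∉ B := by
      by_contra hcon
      push_neg at hcon
      exact hAB (Finset.Subset.antisymm hcon hBA)
    apply Finset.prod_eq_zero hiA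
    simp [hiB]

lemma coeff_comp_nonneg (a b k : ℕ) :
    0 ≤ (((X + 1) ^ a * X ^ b : Polynomial ℤ)).coeff k := by
  have : ((X + 1) ^ a * X ^ b : Polynomial ℤ)
      = Polynomial.map (Nat.castRingHom ℤ) ((X + 1) ^ a * X ^ b) := by
    simp [Polynomial.map_mul, Polynomial.map_pow]
  rw [this, Polynomial.coeff_map]
  exact Int.ofNat_nonneg _

lemma ISF.parts_mk {h h' : Hessenberg n} (F : ISF h)
    (pf : ∀ j u, F.1 j = some u → u < j ∧ j ≤ h'.m u) :
    ISF.parts (h := h') ⟨F.1, pf⟩ = F.parts := ISF.parts_congr rfl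

lemma invC_mk (mm : Fin n → Fin n) {h h' : Hessenberg n} (F : ISF h)
    (pf : ∀ j u, F.1 j = some u → u < j ∧ j ≤ h'.m u) :
    invC mm (⟨F.1, pf⟩ : ISF h') = invC mm F := invC_congr mm rfl

lemma ISF.edgeLen_mk {h h' : Hessenberg n} (F : ISF h)
    (pf : ∀ j u, F.1 j = some u → u < j ∧ j ≤ h'.m u) :
    ISF.edgeLen (h := h') ⟨F.1, pf⟩ = F.edgeLen := ISF.edgeLen_congr rfl

/-- Transfer of `cLam h'` (for `h' ≤ m` pointwise) to a sum over `ISF m`. -/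
lemma cLam_transfer (m h' : Hessenberg n) (hle : ∀ u, (h'.m u : ℕ) ≤ (m.m u : ℕ))
    (lam : Nat.Partition n) :
    cLam h' lam = ∑ F ∈ Finset.univ.filter
        (fun F : ISF m => (∀ j u, F.1 j = some u → (j : ℕ) ≤ (h'.m u : ℕ)) ∧
          F.parts = lam.parts),
      (Polynomial.X : Polynomial ℤ) ^ ((invC h'.m F).card + ∑ j, F.edgeLen j) := by
  unfold cLam
  refine Finset.sum_bij' (fun F _ => (⟨F.1, fun j u hj => ⟨(F.2 j u hj).1, by
        have := (F.2 j u hj).2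
        rw [Fin.le_def] at this ⊢
        exact le_trans this (hle u)⟩⟩ : ISF m))
    (fun G hG => (⟨G.1, fun j u hj => ⟨(G.2 j u hj).1, by
        rw [Fin.le_def]
        exact ((Finset.mem_filter.mp hG).2.1 j u hj)⟩⟩ : ISF h'))
    ?_ ?_ ?_ ?_ ?_
  · intro F hF
    rw [Finset.mem_filter] at hF; apply Finset.mem_filter.mpr
    refine ⟨Finset.mem_univ _, fun j u hj => ?_, ?_⟩
    · have := (F.2 j u hj).2
      rw [Fin.le_def] at this
      exact this
    · simp only [ISF.parts_mk]
      exact hF.2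
  · intro G hG
    rw [Finset.mem_filter] at hG; apply Finset.mem_filter.mpr
    refine ⟨Finset.mem_univ _, ?_⟩
    simp only [ISF.parts_mk]
    exact hG.2.2
  · intro F hF
    rfl
  · intro G hG
    rfl
  · intro F hF
    simp only [invC_mk, ISF.edgeLen_mk]
    rfl


lemma comp_finset_sum {ι : Type*} (s : Finset ι) (f : ι → Polynomial ℤ)
    (q : Polynomial ℤ) : (∑ i ∈ s, f i).comp q = ∑ i ∈ s, (f i).comp q := by
  simp [Polynomial.comp, Polynomial.eval₂_finset_sum]

end Aux3
/-- Let `S` be a decoration on `m` (0-indexed: for `i ∈ S`, `i < m(i)`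
and `m(i-1) < m(i)`, the latter condition being vacuous for the least vertex), and let
`m_{S'}` (for `S' ⊆ S`) be the Hessenberg function obtained by decreasing `m` by one on
`S'` (hypothesis `hms`).  Then the polynomial
`P(q) = Σ_{S' ⊆ S} (-1)^{|S'|} c_λ(m_{S'})` has `P(X+1)` with nonnegative coefficients. -/
theorem decorated_coeff_nonneg (n : ℕ) (hn : 1 ≤ n) (m : Hessenberg n)
    (S : Finset (Fin n))
    (hdec : ∀ i ∈ S, i < m.m i ∧ ∀ j : Fin n, (j : ℕ) + 1 = (i : ℕ) → m.m j < m.m i)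
    (ms : Finset (Fin n) → Hessenberg n)
    (hms : ∀ S' ∈ S.powerset, ∀ j : Fin n,
      ((ms S').m j : ℕ) = if j ∈ S' then (m.m j : ℕ) - 1 else (m.m j : ℕ))
    (lam : Nat.Partition n) :
    ∀ k : ℕ,
      0 ≤ ((∑ S' ∈ S.powerset,
            (-1 : Polynomial ℤ) ^ S'.card * cLam (ms S') lam).comp
          (Polynomial.X + 1)).coeff k := by
  classical
  intro k
  have hS : ∀ i ∈ S, (i : ℕ) < (m.m i : ℕ) := fun i hi => (hdec i hi).1
  -- Step A: rewrite each cLam (ms S') as a sum over ISF m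
  have hstep : ∀ S' ∈ S.powerset,
      cLam (ms S') lam = ∑ F ∈ Finset.univ.filter
          (fun F : ISF m => S' ⊆ Aset m S F ∧ F.parts = lam.parts),
        (Polynomial.X : Polynomial ℤ) ^
          (((invC m.m F \ (Bset m S F).image (fun i => (i, m.m i))).card +
              ∑ j, F.edgeLen j) + (Bset m S F \ S').card) := by
    intro S' hS'
    have hS'S : S' ⊆ S := Finset.mem_powerset.mp hS'
    have hm' := hms S' hS'
    have hle : ∀ u, ((ms S').m u : ℕ) ≤ (m.m u : ℕ) := by
      intro u; rw [hm' u]; split <;> omega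
    rw [cLam_transfer m (ms S') hle lam]
    have hiff : ∀ F : ISF m,
        (∀ j u, F.1 j = some u → (j : ℕ) ≤ ((ms S').m u : ℕ)) ↔ S' ⊆ Aset m S F := by
      intro F
      constructor
      · intro h i hiS'
        rw [Aset, Finset.mem_filter]
        refine ⟨hS'S hiS', fun hcon => ?_⟩
        have h1 := h (m.m i) i hcon
        rw [hm' i, if_pos hiS'] at h1
        have h2 := hS i (hS'S hiS')
        omega
      · intro h j u hju
        obtain ⟨huj, hjum⟩ := F.2 j u hju
        rw [Fin.le_def] at hjum
        rw [hm' u]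
        by_cases huS' : u ∈ S'
        · rw [if_pos huS']
          have hA := h huS'
          rw [Aset, Finset.mem_filter] at hA
          have hne : (j : ℕ) ≠ (m.m u : ℕ) := by
            intro heq
            exact hA.2 (by rwa [show m.m u = j from Fin.ext heq.symm])
          omega
        · rw [if_neg huS']; exact hjum
    rw [Finset.filter_congr (fun F _ => by rw [hiff F])]
    refine Finset.sum_congr rfl (fun F _ => ?_)
    congr 1
    rw [invC_card m S hS (ms S') S' hS'S hm' F]
    ring
  rw [Finset.sum_congr rfl (fun S' hS' => by rw [hstep S' hS'])]
  -- Step B: swap the two sums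
  rw [Finset.sum_congr rfl (fun S' _ => Finset.mul_sum _ _ _)]
  rw [Finset.sum_comm' (s := S.powerset)
    (t := fun S' => Finset.univ.filter
      (fun F : ISF m => S' ⊆ Aset m S F ∧ F.parts = lam.parts))
    (t' := Finset.univ.filter (fun F : ISF m => F.parts = lam.parts))
    (s' := fun F => (Aset m S F).powerset)
    (by
      intro S' F
      simp only [Finset.mem_powerset, Finset.mem_filter, Finset.mem_univ, true_and]
      constructor
      · rintro ⟨-, h1, h2⟩; exact ⟨h1, h2⟩
      · rintro ⟨h1, h2⟩
        exact ⟨h1.trans (Finset.filter_subset _ _), h1, h2⟩)]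
  -- Step C: evaluate the inner alternating sum
  have hinner : ∀ F ∈ Finset.univ.filter (fun F : ISF m => F.parts = lam.parts),
      (∑ S' ∈ (Aset m S F).powerset, (-1 : Polynomial ℤ) ^ S'.card *
        Polynomial.X ^ (((invC m.m F \ (Bset m S F).image (fun i => (i, m.m i))).card +
              ∑ j, F.edgeLen j) + (Bset m S F \ S').card))
      = Polynomial.X ^ ((invC m.m F \ (Bset m S F).image (fun i => (i, m.m i))).card +
              ∑ j, F.edgeLen j) *
        (if Aset m S F = Bset m S F then
          (Polynomial.X - 1) ^ (Bset m S F).card else 0) := by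
    intro F _
    rw [← alt_sum_powerset Polynomial.X (Aset m S F) (Bset m S F) (Bset_subset_Aset m S F),
      Finset.mul_sum]
    refine Finset.sum_congr rfl (fun S' _ => ?_)
    rw [pow_add]
    ring
  rw [Finset.sum_congr rfl hinner]
  -- Step D: compose with X+1 and check coefficients
  rw [comp_finset_sum]
  rw [Polynomial.finset_sum_coeff]
  refine Finset.sum_nonneg (fun F _ => ?_)
  by_cases hAB : Aset m S F = Bset m S F
  · rw [if_pos hAB, Polynomial.mul_comp, Polynomial.pow_comp, Polynomial.X_comp,
      Polynomial.pow_comp, Polynomial.sub_comp, Polynomial.X_comp, Polynomial.one_comp,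
      add_sub_cancel_right]
    exact coeff_comp_nonneg _ _ k
  · rw [if_neg hAB, mul_zero, Polynomial.zero_comp]
    simp
end

section
/- Let G be a graph with vertex set {1,…,n} such that the natural order 1 < 2 < ⋯ < n is a perfect elimination ordering of G. Then for every natural number x, the number of proper colorings κ : {1,…,n} → {1,…,x} of G satisfies, in ℤ: #{proper colorings with x colors} = Σ_{F ∈ F(G)} (−1)^{n − ℓ(F)} x^{ℓ(F)}, the sum running over all increasing spanning forests F of G. -/
open Finset

/-- An increasing spanning forest of a graph `G` on `Fin n`, encoded by its parent
function `g` : `g j = some u` means `{u, j}` is an edge of the forest with `u < j`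
and `{u,j} ∈ E(G)`; `g j = none` means `j` is a root. -/
def ISFG {n : ℕ} (G : SimpleGraph (Fin n)) [DecidableRel G.Adj] : Type :=
  {g : Fin n → Option (Fin n) // ∀ j u, g j = some u → u < j ∧ G.Adj u j}

instance {n : ℕ} (G : SimpleGraph (Fin n)) [DecidableRel G.Adj] : Fintype (ISFG G) := by
  unfold ISFG; infer_instance

/-- `ℓ(F)`, the number of connected components of the forest `F` (its number of roots). -/
def ISFG.numComp {n : ℕ} {G : SimpleGraph (Fin n)} [DecidableRel G.Adj] (F : ISFG G) : ℕ :=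
  (univ.filter (fun j => F.1 j = none)).card

/-- The number of earlier neighbours of `j`. -/
def lowDeg {n : ℕ} (G : SimpleGraph (Fin n)) [DecidableRel G.Adj] (j : Fin n) : ℕ :=
  (univ.filter (fun u => u < j ∧ G.Adj u j)).card

lemma lowDeg_card_eq {n : ℕ} (G : SimpleGraph (Fin (n + 1))) [DecidableRel G.Adj]
    (j : Fin (n + 1)) :
    lowDeg G j
      = (univ.filter (fun v : Fin n => v.castSucc < j ∧ G.Adj v.castSucc j)).card := by
  unfold lowDeg
  symm
  apply Finset.card_bij (fun v _ => v.castSucc)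
  · intro v hv
    simp only [mem_filter, mem_univ, true_and] at hv ⊢
    exact hv
  · intro a ha b hb hab
    exact Fin.castSucc_injective _ hab
  · intro u hu
    simp only [mem_filter, mem_univ, true_and] at hu
    have hun : (u : ℕ) < n := by
      have h1 : (u : ℕ) < (j : ℕ) := hu.1
      have h2 : (j : ℕ) ≤ n := Nat.lt_succ_iff.mp j.isLt
      omega
    refine ⟨⟨u, hun⟩, ?_, ?_⟩
    · simp only [mem_filter, mem_univ, true_and]
      have : (⟨u, hun⟩ : Fin n).castSucc = u := by ext; rfl
      rw [this]; exact hu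
    · ext; rfl

/-- The chromatic-polynomial-type product formula for graphs whose natural order is a
perfect elimination ordering. -/
lemma color_count (n : ℕ) :
    ∀ (G : SimpleGraph (Fin n)) [DecidableRel G.Adj],
    (∀ i i' j : Fin n, i < j → i' < j → G.Adj i j → G.Adj i' j → i ≠ i' → G.Adj i i') →
    ∀ x : ℕ,
    ((univ.filter (fun κ : Fin n → Fin x => ∀ u v : Fin n, G.Adj u v → κ u ≠ κ v)).card : ℤ)
      = ∏ j : Fin n, ((x : ℤ) - (lowDeg G j : ℤ)) := by
  induction n with
  | zero =>
    intro G _ _ x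
    rw [Finset.filter_true_of_mem (fun κ _ => by intro u; exact u.elim0)]
    simp
  | succ n IH =>
    intro G instG hpeo x
    set G' : SimpleGraph (Fin n) := G.comap Fin.castSucc with hG'
    haveI instG' : DecidableRel G'.Adj := fun u v =>
      decidable_of_iff (G.Adj u.castSucc v.castSucc) (by rw [hG']; simp)
    have hG'adj : ∀ u v : Fin n, G'.Adj u v ↔ G.Adj u.castSucc v.castSucc := by
      intro u v; rw [hG']; simp
    have hpeo' : ∀ i i' j : Fin n, i < j → i' < j → G'.Adj i j → G'.Adj i' j → i ≠ i' →
        G'.Adj i i' := by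
      intro i i' j hij hi'j ha ha' hne
      rw [hG'adj] at ha ha' ⊢
      exact hpeo _ _ _ (by simpa using hij) (by simpa using hi'j) ha ha'
        (fun h => hne (Fin.castSucc_injective _ h))
    -- the finsets of proper colorings
    set S : Finset (Fin (n + 1) → Fin x) :=
      univ.filter (fun κ => ∀ u v : Fin (n + 1), G.Adj u v → κ u ≠ κ v) with hS
    set T : Finset (Fin n → Fin x) :=
      univ.filter (fun κ => ∀ u v : Fin n, G'.Adj u v → κ u ≠ κ v) with hT
    set N : Finset (Fin n) := univ.filter (fun i => G.Adj i.castSucc (Fin.last n)) with hN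
    have hmaps : ∀ κ ∈ S, (fun i => κ (Fin.castSucc i)) ∈ T := by
      intro κ hκ
      rw [hS, mem_filter] at hκ
      rw [hT, mem_filter]
      exact ⟨mem_univ _, fun u v ha => hκ.2 _ _ ((hG'adj u v).mp ha)⟩
    have hfib : ∀ κ' ∈ T, (S.filter (fun κ => (fun i => κ (Fin.castSucc i)) = κ')).card
        = x - N.card := by
      intro κ' hκ'
      rw [hT, mem_filter] at hκ'
      have hinj : Set.InjOn κ' ↑N := by
        intro a ha b hb hab
        by_contra hne
        rw [hN, mem_coe, mem_filter] at ha hb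
        have hadj : G'.Adj a b := by
          rw [hG'adj]
          exact hpeo _ _ (Fin.last n) (Fin.castSucc_lt_last a) (Fin.castSucc_lt_last b)
            ha.2 hb.2 (fun h => hne (Fin.castSucc_injective _ h))
        exact hκ'.2 _ _ hadj hab
      have himg : (N.image κ').card = N.card := Finset.card_image_of_injOn hinj
      have hcard : (S.filter (fun κ => (fun i => κ (Fin.castSucc i)) = κ')).card
          = (univ \ N.image κ').card := by
        apply Finset.card_bij (fun κ _ => κ (Fin.last n))
        · intro κ hκ
          rw [mem_filter] at hκ
          obtain ⟨hκS, hres⟩ := hκ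
          rw [hS, mem_filter] at hκS
          rw [mem_sdiff]
          refine ⟨mem_univ _, fun hmem => ?_⟩
          rw [mem_image] at hmem
          obtain ⟨i, hiN, hi⟩ := hmem
          rw [hN, mem_filter] at hiN
          have := hκS.2 _ _ hiN.2
          apply this
          rw [← hi, ← hres]
        · intro κ₁ h₁ κ₂ h₂ hlast
          rw [mem_filter] at h₁ h₂
          funext j
          refine Fin.lastCases ?_ ?_ j
          · exact hlast
          · intro i
            have := congrFun h₁.2 i
            have h2 := congrFun h₂.2 i
            rw [this, h2]
        · intro c hc
          rw [mem_sdiff, mem_image] at hc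
          refine ⟨Fin.snoc κ' c, ?_, Fin.snoc_last _ _⟩
          rw [mem_filter]
          constructor
          · rw [hS, mem_filter]
            refine ⟨mem_univ _, ?_⟩
            intro u
            refine Fin.lastCases ?_ ?_ u
            · intro v
              refine Fin.lastCases ?_ ?_ v
              · intro ha; exact absurd ha (G.loopless.irrefl _)
              · intro i ha
                rw [Fin.snoc_last, Fin.snoc_castSucc]
                intro h
                exact hc.2 ⟨i, by rw [hN, mem_filter]; exact ⟨mem_univ _, ha.symm⟩, h.symm⟩
            · intro i v
              refine Fin.lastCases ?_ ?_ v
              · intro ha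
                rw [Fin.snoc_last, Fin.snoc_castSucc]
                intro h
                exact hc.2 ⟨i, by rw [hN, mem_filter]; exact ⟨mem_univ _, ha⟩, h⟩
              · intro i' ha
                rw [Fin.snoc_castSucc, Fin.snoc_castSucc]
                exact hκ'.2 _ _ ((hG'adj i i').mpr ha)
          · funext i
            simp [Fin.snoc_castSucc]
      rw [hcard, Finset.card_sdiff_of_subset (by intro a _; exact mem_univ a), himg]
      simp
    have hsum : S.card = T.card * (x - N.card) := by
      rw [Finset.card_eq_sum_card_fiberwise hmaps]
      rw [Finset.sum_congr rfl hfib, Finset.sum_const, smul_eq_mul]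
    -- product decomposition
    have hprod : ∏ j : Fin (n + 1), ((x : ℤ) - (lowDeg G j : ℤ))
        = (∏ j : Fin n, ((x : ℤ) - (lowDeg G' j : ℤ))) * ((x : ℤ) - (N.card : ℤ)) := by
      rw [Fin.prod_univ_castSucc]
      congr 1
      · apply Finset.prod_congr rfl
        intro j _
        congr 2
        rw [lowDeg_card_eq]
        unfold lowDeg
        apply Finset.card_nbij id
        · intro v hv
          simp only [mem_coe, mem_filter, mem_univ, true_and, Fin.castSucc_lt_castSucc_iff] at hv ⊢
          exact ⟨hv.1, (hG'adj _ _).mpr hv.2⟩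
        · intro a _ b _ h; exact h
        · intro v hv
          simp only [Set.mem_image, mem_coe, mem_filter, mem_univ, true_and,
            Fin.castSucc_lt_castSucc_iff] at hv ⊢
          exact ⟨v, ⟨hv.1, (hG'adj _ _).mp hv.2⟩, rfl⟩
      · congr 2
        rw [lowDeg_card_eq]
        rw [hN]
        congr 1
        apply Finset.filter_congr
        intro v _
        simp [Fin.castSucc_lt_last]
    rw [hprod, ← IH G' hpeo' x, ← hT]
    by_cases hT0 : T.card = 0
    · rw [hsum, hT0]
      simp
    · -- T is nonempty, so N.card ≤ x
      obtain ⟨κ', hκ'⟩ := Finset.card_pos.mp (Nat.pos_of_ne_zero hT0)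
      rw [hT, mem_filter] at hκ'
      have hinj : Set.InjOn κ' ↑N := by
        intro a ha b hb hab
        by_contra hne
        rw [hN, mem_coe, mem_filter] at ha hb
        have hadj : G'.Adj a b := by
          rw [hG'adj]
          exact hpeo _ _ (Fin.last n) (Fin.castSucc_lt_last a) (Fin.castSucc_lt_last b)
            ha.2 hb.2 (fun h => hne (Fin.castSucc_injective _ h))
        exact hκ'.2 _ _ hadj hab
      have hle : N.card ≤ x := by
        calc N.card = (N.image κ').card := (Finset.card_image_of_injOn hinj).symm
          _ ≤ (univ : Finset (Fin x)).card := Finset.card_le_card (fun a _ => mem_univ a)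
          _ = x := by simp
      rw [hsum]
      push_cast [Nat.cast_sub hle]
      ring

lemma isf_sum {n : ℕ} (G : SimpleGraph (Fin n)) [DecidableRel G.Adj] (x : ℕ) :
    ∑ F : ISFG G, (-1 : ℤ) ^ (n - F.numComp) * (x : ℤ) ^ F.numComp
      = ∏ j : Fin n, ((x : ℤ) - (lowDeg G j : ℤ)) := by
  classical
  -- the equivalence with a dependent product of options
  let β : Fin n → Type := fun j => {u : Fin n // u < j ∧ G.Adj u j}
  let e : ISFG G ≃ (∀ j, Option (β j)) :=
    { toFun := fun F j => (F.1 j).pmap (fun u hu => (⟨u, hu⟩ : β j))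
        (fun u hu => F.2 j u hu)
      invFun := fun h => ⟨fun j => (h j).map Subtype.val, by
        intro j u hu
        have hu' : (h j).map Subtype.val = some u := hu
        rcases hj : h j with _ | v
        · rw [hj] at hu'; simp at hu'
        · rw [hj] at hu'
          simp only [Option.map_some, Option.some.injEq] at hu'
          rw [← hu']; exact v.2⟩
      left_inv := by
        intro F
        apply Subtype.ext
        funext j
        rcases hj : F.1 j with _ | u <;> simp [hj]
      right_inv := by
        intro h
        funext j
        rcases hj : h j with _ | u <;> simp [hj] }
  have hterm : ∀ F : ISFG G,
      (-1 : ℤ) ^ (n - F.numComp) * (x : ℤ) ^ F.numComp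
        = ∏ j : Fin n, (if (e F) j = none then (x : ℤ) else -1) := by
    intro F
    have hval : ∀ j, ((e F) j).map Subtype.val = F.1 j := by
      intro j
      exact congrFun (congrArg Subtype.val (e.left_inv F)) j
    have hnone : ∀ j, ((e F) j = none) ↔ (F.1 j = none) := by
      intro j
      rw [← hval j]
      rcases (e F) j with _ | u <;> simp
    rw [Finset.prod_congr rfl (fun j _ => by rw [if_congr (hnone j) rfl rfl])]
    rw [Finset.prod_ite, Finset.prod_const, Finset.prod_const]
    have hcard : (univ.filter (fun j => ¬ F.1 j = none)).card = n - F.numComp := by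
      have := Finset.card_filter_add_card_filter_not (s := univ)
        (p := fun j => F.1 j = none)
      simp only [Finset.card_univ, Fintype.card_fin] at this
      unfold ISFG.numComp
      omega
    have h2 : (univ.filter (fun j => F.1 j = none)).card = F.numComp := rfl
    rw [hcard, h2]
    ring
  rw [Finset.sum_congr rfl (fun F _ => hterm F)]
  rw [Equiv.sum_comp e (fun h => ∏ j : Fin n, (if h j = none then (x : ℤ) else -1))]
  rw [show (∑ h : ∀ j, Option (β j), ∏ j : Fin n, (if h j = none then (x : ℤ) else -1))
      = ∑ h ∈ Fintype.piFinset (fun j => (univ : Finset (Option (β j)))),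
          ∏ j : Fin n, (if h j = none then (x : ℤ) else -1) by
    rw [Fintype.piFinset_univ]]
  rw [← Finset.prod_univ_sum (fun j => (univ : Finset (Option (β j))))
    (fun j o => if o = none then (x : ℤ) else -1)]
  apply Finset.prod_congr rfl
  intro j _
  rw [Fintype.sum_option, if_pos rfl, Finset.sum_congr rfl (fun u _ => if_neg (by simp)),
    Finset.sum_const, nsmul_eq_mul, Finset.card_univ]
  have : Fintype.card (β j) = lowDeg G j := Fintype.card_subtype _
  rw [this]
  ring

/-- If the natural order on `Fin n` is a perfect elimination ordering of
`G`, then for every `x : ℕ` the number of proper colorings of `G` with `x` colors equals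
`Σ_{F ∈ F(G)} (-1)^{n-ℓ(F)} x^{ℓ(F)}`, the sum over all increasing spanning forests of `G`. -/
theorem card_proper_colorings_eq_sum_isf (n : ℕ) (hn : 1 ≤ n)
    (G : SimpleGraph (Fin n)) [DecidableRel G.Adj]
    (hpeo : ∀ i i' j : Fin n, i < j → i' < j → G.Adj i j → G.Adj i' j → i ≠ i' → G.Adj i i')
    (x : ℕ) :
    ((Finset.univ.filter
        (fun κ : Fin n → Fin x => ∀ u v : Fin n, G.Adj u v → κ u ≠ κ v)).card : ℤ)
      = ∑ F : ISFG G, (-1 : ℤ) ^ (n - F.numComp) * (x : ℤ) ^ F.numComp := by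
  rw [isf_sum G x]
  exact color_count n G hpeo x
end
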